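/- Let F be a symmetric fourth-order tensor on ℝⁿ with multilinear form F⁴ and convex score function S⁴(x) = F⁴(x,x,x,x). Then for all x,y,z,t ∈ ℝⁿ: F⁴(x,y,z,t) ≤ max{ F⁴(u,u,u,u) : u ∈ {x,y,z,t} }. -/

import Mathlib

/-- A fourth-order tensor is symmetric if its entries are invariant under any
permutation of the indices. -/
def Sym4 {n : ℕ} (F : Fin n → Fin n → Fin n → Fin n → ℝ) : Prop :=
  ∀ (σ : Equiv.Perm (Fin 4)) (v : Fin 4 → Fin n),
    F (v (σ 0)) (v (σ 1)) (v (σ 2)) (v (σ 3)) = F (v 0) (v 1) (v 2) (v 3)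

/-- The multilinear form associated to a fourth-order tensor. -/
def mform4 {n : ℕ} (F : Fin n → Fin n → Fin n → Fin n → ℝ)
    (x y z t : Fin n → ℝ) : ℝ :=
  ∑ i, ∑ j, ∑ k, ∑ l, F i j k l * x i * y j * z k * t l

/-!
Write `S x = M x x x x` for the symmetric 4-linear form `M`. Convexity of the quartic `S` makes its
Hessian positive semidefinite, `M p p w w ≥ 0`, since
`S (s • p + w) + S (s • p - w) - 2 S (s • p) = 12 s² M p p w w + 2 S w` for every `s`. So each
`M p p` is a positive semidefinite bilinear form and `2 M p p u v ≤ M p p u u + M p p v v`.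
Polarizing in the first two arguments (`p = x ± y`) gives
`4 M x y z t ≤ ∑ M a a b b` over `a ∈ {x, y}`, `b ∈ {z, t}`, and
`M a a b b ≤ (S a + S b) / 2` because `M (a + b) (a + b) (a - b) (a - b) = S a - 2 M a a b b + S b`.
-/

open Set

theorem nonneg_of_forall_sq_mul_add_nonneg {a b : ℝ} (h : ∀ s : ℝ, 0 ≤ s ^ 2 * a + b) : 0 ≤ a := by
  by_contra! ha
  have hb : 0 ≤ b := by simpa using h 0
  have hs := h √((b + 1) / -a)
  have hsq : (b + 1) / -a * a = -(b + 1) := by field_simp [ha.ne]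
  rw [Real.sq_sqrt (div_nonneg (by linarith) (by linarith)), hsq] at hs
  linarith

section Quadrilinear

variable {E : Type*} [AddCommGroup E] [Module ℝ E]

-- Adjacent transpositions generate all permutations of the four arguments.
structure IsSymmQuadrilinear (M : E →ₗ[ℝ] E →ₗ[ℝ] E →ₗ[ℝ] E →ₗ[ℝ] ℝ) : Prop where
  swap₁₂ : ∀ x y z t, M y x z t = M x y z t
  swap₂₃ : ∀ x y z t, M x z y t = M x y z t
  swap₃₄ : ∀ x y z t, M x y t z = M x y z t

namespace LinearMap

variable (M : E →ₗ[ℝ] E →ₗ[ℝ] E →ₗ[ℝ] E →ₗ[ℝ] ℝ)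

/- Instance search does not find the group structure on `E →ₗ E →ₗ E →ₗ ℝ`, so `map_sub`
does not apply in the first argument. -/
theorem map_sub_apply₃ (x y a b c : E) : M (x - y) a b c = M x a b c - M y a b c := by
  have h := M.map_add (x - y) y
  rw [sub_add_cancel] at h
  simp only [h, add_apply, add_sub_cancel_right]

theorem parallelogram₁₂ (x y z t : E) :
    M (x + y) (x + y) z t + M (x - y) (x - y) z t = 2 * M x x z t + 2 * M y y z t := by
  simp only [map_add, map_sub, map_sub_apply₃, add_apply, sub_apply]
  ring

end LinearMap

namespace IsSymmQuadrilinear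

variable {M : E →ₗ[ℝ] E →ₗ[ℝ] E →ₗ[ℝ] E →ₗ[ℝ] ℝ} (hM : IsSymmQuadrilinear M)
include hM

theorem swap_pairs (x y z t : E) : M z t x y = M x y z t := by
  rw [← hM.swap₂₃, ← hM.swap₁₂, ← hM.swap₃₄, ← hM.swap₂₃]

theorem polarization₁₂ (x y z t : E) :
    M (x + y) (x + y) z t - M (x - y) (x - y) z t = 4 * M x y z t := by
  simp only [map_add, map_sub, M.map_sub_apply₃, LinearMap.add_apply, LinearMap.sub_apply]
  rw [hM.swap₁₂ y x]
  ring

theorem apply_add_sub₁₂ (x y z t : E) : M (x + y) (x - y) z t = M x x z t - M y y z t := by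
  simp only [map_add, map_sub, LinearMap.add_apply, LinearMap.sub_apply]
  rw [hM.swap₁₂ y x]
  ring

theorem apply_add_sub₃₄ (x y z t : E) : M x y (z + t) (z - t) = M x y z z - M x y t t := by
  simp only [map_add, map_sub, LinearMap.add_apply]
  rw [hM.swap₃₄ x y t z]
  ring

theorem apply_sub_sub₃₄ (x y u v : E) :
    M x y (u - v) (u - v) = M x y u u - 2 * M x y u v + M x y v v := by
  simp only [map_sub, LinearMap.sub_apply]
  rw [hM.swap₃₄ x y v u]
  ring

theorem apply_add_add_sub_sub (a b : E) :
    M (a + b) (a + b) (a - b) (a - b) = M a a a a - 2 * M a a b b + M b b b b := by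
  rw [← hM.swap₂₃, hM.apply_add_sub₁₂, hM.apply_add_sub₃₄, hM.apply_add_sub₃₄,
    hM.swap_pairs b b a a]
  ring

theorem apply_add_self_add_apply_sub_self (u w : E) :
    M (u + w) (u + w) (u + w) (u + w) + M (u - w) (u - w) (u - w) (u - w) =
      2 * M u u u u + 12 * M u u w w + 2 * M w w w w := by
  simp only [map_add, map_sub, M.map_sub_apply₃, LinearMap.add_apply, LinearMap.sub_apply]
  have h₁ : M u w u w = M u u w w := hM.swap₂₃ u u w w
  have h₂ : M u w w u = M u u w w := (hM.swap₃₄ u w u w).trans h₁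
  have h₃ : M w u u w = M u u w w := (hM.swap₁₂ u w u w).trans h₁
  have h₄ : M w u w u = M u u w w := (hM.swap₁₂ u w w u).trans h₂
  have h₅ : M w w u u = M u u w w := hM.swap_pairs u u w w
  linarith

variable (hS : ConvexOn ℝ univ fun x => M x x x x)
include hS

theorem apply_self_self_nonneg (p w : E) : 0 ≤ M p p w w := by
  refine nonneg_of_forall_sq_mul_add_nonneg (b := M w w w w / 6) fun s => ?_
  have hmid := hS.2 (mem_univ (s • p + w)) (mem_univ (s • p - w)) one_half_pos.le
    one_half_pos.le (add_halves 1)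
  rw [show (1 / 2 : ℝ) • (s • p + w) + (1 / 2 : ℝ) • (s • p - w) = s • p by module,
    smul_eq_mul, smul_eq_mul] at hmid
  have hscale : M (s • p) (s • p) w w = s ^ 2 * M p p w w := by
    simp only [map_smul, LinearMap.smul_apply, smul_eq_mul]
    ring
  linarith [hM.apply_add_self_add_apply_sub_self (s • p) w]

theorem two_mul_apply_le (p u v : E) : 2 * M p p u v ≤ M p p u u + M p p v v := by
  linarith [hM.apply_self_self_nonneg hS p (u - v), hM.apply_sub_sub₃₄ p p u v]

theorem apply_self_self_le (a b : E) : M a a b b ≤ (M a a a a + M b b b b) / 2 := by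
  linarith [hM.apply_self_self_nonneg hS (a + b) (a - b), hM.apply_add_add_sub_sub a b]

theorem four_mul_apply_le (x y z t : E) :
    4 * M x y z t ≤ M x x z z + M y y z z + M x x t t + M y y t t := by
  have hp := hM.two_mul_apply_le hS (x + y) z t
  have hq := hM.two_mul_apply_le hS (x - y) z (-t)
  simp only [map_neg, LinearMap.neg_apply, neg_neg] at hq
  linarith [hM.polarization₁₂ x y z t, M.parallelogram₁₂ x y z z, M.parallelogram₁₂ x y t t]

theorem apply_le_max (x y z t : E) :
    M x y z t ≤ max (max (M x x x x) (M y y y y)) (max (M z z z z) (M t t t t)) := by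
  set m := max (max (M x x x x) (M y y y y)) (max (M z z z z) (M t t t t))
  have hx : M x x x x ≤ m := le_max_of_le_left (le_max_left _ _)
  have hy : M y y y y ≤ m := le_max_of_le_left (le_max_right _ _)
  have hz : M z z z z ≤ m := le_max_of_le_right (le_max_left _ _)
  have ht : M t t t t ≤ m := le_max_of_le_right (le_max_right _ _)
  linarith [hM.four_mul_apply_le hS x y z t, hM.apply_self_self_le hS x z,
    hM.apply_self_self_le hS y z, hM.apply_self_self_le hS x t, hM.apply_self_self_le hS y t]

end IsSymmQuadrilinear

end Quadrilinear

section Tensor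

variable {n : ℕ}

def mform4LinearMap (F : Fin n → Fin n → Fin n → Fin n → ℝ) :
    (Fin n → ℝ) →ₗ[ℝ] (Fin n → ℝ) →ₗ[ℝ] (Fin n → ℝ) →ₗ[ℝ] (Fin n → ℝ) →ₗ[ℝ] ℝ :=
  Fintype.linearCombination ℝ fun i => Fintype.linearCombination ℝ fun j =>
    Fintype.linearCombination ℝ fun k => Fintype.linearCombination ℝ fun l => F i j k l

theorem mform4LinearMap_apply (F : Fin n → Fin n → Fin n → Fin n → ℝ) (x y z t : Fin n → ℝ) :
    mform4LinearMap F x y z t = mform4 F x y z t := by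
  simp only [mform4LinearMap, mform4, Fintype.linearCombination_apply, LinearMap.sum_apply,
    LinearMap.smul_apply, smul_eq_mul, Finset.mul_sum]
  refine Finset.sum_congr rfl fun i _ => Finset.sum_congr rfl fun j _ =>
    Finset.sum_congr rfl fun k _ => Finset.sum_congr rfl fun l _ => ?_
  ring

namespace Sym4

variable {F : Fin n → Fin n → Fin n → Fin n → ℝ} (hF : Sym4 F)
include hF

theorem swap₁₂ (i j k l : Fin n) : F j i k l = F i j k l := by
  simpa [Equiv.swap_apply_def] using hF (Equiv.swap 0 1) ![i, j, k, l]

theorem swap₂₃ (i j k l : Fin n) : F i k j l = F i j k l := by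
  simpa [Equiv.swap_apply_def] using hF (Equiv.swap 1 2) ![i, j, k, l]

theorem swap₃₄ (i j k l : Fin n) : F i j l k = F i j k l := by
  simpa [Equiv.swap_apply_def] using hF (Equiv.swap 2 3) ![i, j, k, l]

theorem isSymmQuadrilinear_mform4LinearMap : IsSymmQuadrilinear (mform4LinearMap F) where
  swap₁₂ x y z t := by
    simp only [mform4LinearMap_apply, mform4]
    rw [Finset.sum_comm]
    refine Finset.sum_congr rfl fun i _ => Finset.sum_congr rfl fun j _ =>
      Finset.sum_congr rfl fun k _ => Finset.sum_congr rfl fun l _ => ?_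
    rw [hF.swap₁₂]
    ring
  swap₂₃ x y z t := by
    simp only [mform4LinearMap_apply, mform4]
    refine Finset.sum_congr rfl fun i _ => ?_
    rw [Finset.sum_comm]
    refine Finset.sum_congr rfl fun j _ =>
      Finset.sum_congr rfl fun k _ => Finset.sum_congr rfl fun l _ => ?_
    rw [hF.swap₂₃]
    ring
  swap₃₄ x y z t := by
    simp only [mform4LinearMap_apply, mform4]
    refine Finset.sum_congr rfl fun i _ => Finset.sum_congr rfl fun j _ => ?_
    rw [Finset.sum_comm]
    refine Finset.sum_congr rfl fun k _ => Finset.sum_congr rfl fun l _ => ?_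
    rw [hF.swap₃₄]
    ring

end Sym4

end Tensor

/-- If the score function of a symmetric fourth-order tensor is convex, then
`F⁴(x,y,z,t) ≤ max { F⁴(u,u,u,u) : u ∈ {x,y,z,t} }`. -/
theorem stmt_4 {n : ℕ} (F : Fin n → Fin n → Fin n → Fin n → ℝ) (hF : Sym4 F)
    (hconv : ConvexOn ℝ Set.univ (fun x : Fin n → ℝ => mform4 F x x x x)) :
    ∀ x y z t : Fin n → ℝ,
      mform4 F x y z t ≤
        max (max (mform4 F x x x x) (mform4 F y y y y))
            (max (mform4 F z z z z) (mform4 F t t t t)) := by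
  have hS : ConvexOn ℝ univ fun x => mform4LinearMap F x x x x := by
    simpa only [mform4LinearMap_apply] using hconv
  intro x y z t
  simpa only [mform4LinearMap_apply] using
    hF.isSymmQuadrilinear_mform4LinearMap.apply_le_max hS x y z t
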